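/- arXiv:1509.01511 — 6 statements merged into one kernel-verified Lean document; each statement's English description precedes it below -/
import Mathlib

section
/- Let $x, y$ be coprime positive integers with $x/y \ge 1$ and $x \ne y$, and suppose $x/(y-x) = [a_1,\dots,a_n]$ as a negative continued fraction with all $a_i \le -2$ (interpreting $[a_1,\dots,a_n] = a_1 - 1/(a_2 - \cdots - 1/a_n)$). Define integers $y_0,\dots,y_n$ by $y_n = 1$, $y_{n+1} = 0$, $y_{j-1} = -a_j y_j - y_{j+1}$ for $2 \le j \le n$, and $-y_0 = -(a_1+1)y_1 - y_2$; equivalently, $(y_0,\dots,y_n)$ with $y_n = 1$ spans the kernel of the matrix obtained from $M(a_1+1, a_2, \dots, a_n)$ by negating its $(1,1)$ entry, and $y_j > 0$ for $j \ge 1$. Then $y_0 = -y$ and $y_1 = x - y$. -/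
/-- The negative continued fraction `[a₁,…,aₙ] = a₁ - 1/(a₂ - 1/(⋯ - 1/aₙ))`. -/
def negCF : List ℚ → ℚ
  | [] => 0
  | [a] => a
  | a :: b :: rest => a - 1 / negCF (b :: rest)

lemma negCF_cons (c : ℚ) (l : List ℚ) (h : l ≠ []) :
    negCF (c :: l) = c - 1 / negCF l := by
  cases l with
  | nil => exact absurd rfl h
  | cons b rest => rfl

lemma negCF_lt : ∀ l : List ℚ, (∀ a ∈ l, a ≤ -2) → l ≠ [] → negCF l < -1
  | [], _, hne => absurd rfl hne
  | [a], h, _ => by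
      have := h a (by simp)
      simp only [negCF]; linarith
  | a :: b :: rest, h, _ => by
      have ih := negCF_lt (b :: rest) (fun x hx => h x (by simp [hx])) (by simp)
      have hC0 : negCF (b :: rest) < 0 := by linarith
      have h1 : (-1 : ℚ) < 1 / negCF (b :: rest) := by
        rw [lt_div_iff_of_neg hC0]; linarith
      have ha := h a (by simp)
      rw [negCF_cons a (b :: rest) (by simp)]
      linarith

section aux

variable (n : ℕ) (a : ℕ → ℤ) (yv : ℕ → ℤ)

lemma cf_aux (hyn : yv n = 1) (htail : ∀ j, n + 1 ≤ j → yv j = 0)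
    (hrec : ∀ j, 2 ≤ j → j ≤ n → yv (j - 1) = -a j * yv j - yv (j + 1))
    (ha : ∀ i, 1 ≤ i → i ≤ n → a i ≤ -2) :
    ∀ m j, 2 ≤ j → j ≤ n → n - j = m →
      (yv (j - 1) : ℚ)
        = - negCF ((List.range (n + 1 - j)).map (fun i => ((a (i + j) : ℤ) : ℚ))) * yv j := by
  intro m
  induction m with
  | zero =>
      intro j hj2 hjn hm
      have hjn' : j = n := by omega
      subst hjn'
      have h1 : j + 1 - j = 1 := by omega
      rw [h1]
      have hr := hrec j hj2 le_rfl
      have ht := htail (j + 1) le_rfl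
      rw [show List.range 1 = [0] from rfl, List.map_cons, List.map_nil]
      have : negCF [((a (0 + j) : ℤ) : ℚ)] = ((a j : ℤ) : ℚ) := by norm_num [negCF]
      rw [this, hr, ht, hyn]
      push_cast
      ring
  | succ m ih =>
      intro j hj2 hjn hm
      have hjlt : j + 1 ≤ n := by omega
      have ih' := ih (j + 1) (by omega) hjlt (by omega)
      set L' : List ℚ := (List.range (n + 1 - (j + 1))).map (fun i => ((a (i + (j + 1)) : ℤ) : ℚ)) with hL'
      have hL'ne : L' ≠ [] := by
        simp only [hL', ne_eq, List.map_eq_nil_iff, List.range_eq_nil]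
        omega
      have hL'le : ∀ q ∈ L', q ≤ -2 := by
        intro q hq
        simp only [hL', List.mem_map, List.mem_range] at hq
        obtain ⟨i, hi, rfl⟩ := hq
        have := ha (i + (j + 1)) (by omega) (by omega)
        exact_mod_cast this
      have hC : negCF L' < -1 := negCF_lt L' hL'le hL'ne
      have hC0 : negCF L' ≠ 0 := by linarith
      -- rewrite the goal list as `a j :: L'`
      have hsplit : (List.range (n + 1 - j)).map (fun i => ((a (i + j) : ℤ) : ℚ))
          = ((a j : ℤ) : ℚ) :: L' := by
        have h1 : n + 1 - j = (n + 1 - (j + 1)) + 1 := by omega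
        rw [h1, List.range_succ_eq_map, List.map_cons, List.map_map]
        congr 1
        · norm_num
        · rw [hL']
          apply List.map_congr_left
          intro i _
          simp only [Function.comp_apply]
          congr 2
          omega
      rw [hsplit, negCF_cons _ _ hL'ne]
      have hr := hrec j hj2 hjn
      have hsimp : j + 1 - 1 = j := by omega
      rw [hsimp] at ih'
      have hr' : (yv (j - 1) : ℚ) = -(a j : ℚ) * yv j - yv (j + 1) := by
        rw [hr]; push_cast; ring
      rw [hr', ih']
      field_simp

lemma cop_aux (hyn : yv n = 1) (htail : ∀ j, n + 1 ≤ j → yv j = 0)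
    (hrec : ∀ j, 2 ≤ j → j ≤ n → yv (j - 1) = -a j * yv j - yv (j + 1)) :
    ∀ m j, 1 ≤ j → j ≤ n → n - j = m → IsCoprime (yv j) (yv (j + 1)) := by
  intro m
  induction m with
  | zero =>
      intro j hj1 hjn hm
      have : j = n := by omega
      subst this
      rw [hyn]
      exact isCoprime_one_left
  | succ m ih =>
      intro j hj1 hjn hm
      have hjlt : j + 1 ≤ n := by omega
      have ih' := ih (j + 1) (by omega) hjlt (by omega)
      have hr := hrec (j + 1) (by omega) hjlt
      have hs : j + 1 - 1 = j := by omega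
      rw [hs] at hr
      have h1 : IsCoprime (-yv (j + 1 + 1)) (yv (j + 1)) := ih'.neg_right.symm
      have h2 := h1.add_mul_left_left (-a (j + 1))
      have : yv j = -yv (j + 1 + 1) + yv (j + 1) * -a (j + 1) := by rw [hr]; ring
      rwa [← this] at h2

end aux

/-- if `x/(y-x) = [a₁,…,aₙ]` with all `aᵢ ≤ -2`, and `(y₀,…,yₙ)` spans the kernel
of `M⁻(a₁+1,a₂,…,aₙ)` normalized with `yₙ = 1` and `y_j > 0` for `j ≥ 1`, then `y₀ = -y` and
`y₁ = x - y`. -/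
theorem stmt2 (x y : ℤ) (hx : 0 < x) (hy : 0 < y) (hcop : IsCoprime x y)
    (hxy : y ≤ x) (hne : x ≠ y)
    (n : ℕ) (hn : 1 ≤ n) (a : ℕ → ℤ) (ha : ∀ i, 1 ≤ i → i ≤ n → a i ≤ -2)
    (hcf : negCF ((List.range n).map (fun i => ((a (i + 1) : ℤ) : ℚ)))
      = (x : ℚ) / ((y : ℚ) - (x : ℚ)))
    (yv : ℕ → ℤ) (hyn : yv n = 1) (htail : ∀ j, n + 1 ≤ j → yv j = 0)
    (hpos : ∀ j, 1 ≤ j → j ≤ n → 0 < yv j)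
    (hrec1 : -yv 0 = -(a 1 + 1) * yv 1 - yv 2)
    (hrec : ∀ j, 2 ≤ j → j ≤ n → yv (j - 1) = -a j * yv j - yv (j + 1)) :
    yv 0 = -y ∧ yv 1 = x - y := by
  have hyx : (y : ℚ) - (x : ℚ) ≠ 0 := by
    intro h
    apply hne
    have : (x : ℚ) = (y : ℚ) := by linarith
    exact_mod_cast this
  -- coprimality of (yv 0, yv 1)
  have hcop12 : IsCoprime (yv 1) (yv 2) := by
    have := cop_aux n a yv hyn htail hrec (n - 1) 1 le_rfl hn rfl
    exact this
  have h0eq : yv 0 = yv 2 + yv 1 * (a 1 + 1) := by linarith [hrec1]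
  have hcop01 : IsCoprime (yv 0) (yv 1) := by
    have := hcop12.symm.add_mul_left_left (a 1 + 1)
    rwa [← h0eq] at this
  -- the key identity
  have hkey : yv 0 * (y - x) = y * yv 1 := by
    have hQ : (yv 0 : ℚ) * ((y : ℚ) - x) = (y : ℚ) * yv 1 := by
      rcases eq_or_lt_of_le hn with h1 | h2
      · -- n = 1
        have hn1 : n = 1 := h1.symm
        subst hn1
        have hy1 : yv 1 = 1 := hyn
        have hy2 : yv 2 = 0 := htail 2 le_rfl
        rw [show List.range 1 = [0] from rfl, List.map_cons, List.map_nil] at hcf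
        have hcf' : ((a 1 : ℤ) : ℚ) = (x : ℚ) / ((y : ℚ) - x) := by
          have : negCF [((a (0 + 1) : ℤ) : ℚ)] = ((a 1 : ℤ) : ℚ) := by norm_num [negCF]
          rwa [this] at hcf
        have h0 : (yv 0 : ℚ) = ((a 1 : ℤ) : ℚ) + 1 := by
          rw [h0eq, hy1, hy2]; push_cast; ring
        rw [h0, hcf', hy1]
        push_cast
        field_simp
        ring
      · -- 2 ≤ n
        have hn2 : 2 ≤ n := h2
        have haux := cf_aux n a yv hyn htail hrec ha (n - 2) 2 le_rfl hn2 rfl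
        set L' : List ℚ := (List.range (n + 1 - 2)).map (fun i => ((a (i + 2) : ℤ) : ℚ)) with hL'
        have hL'ne : L' ≠ [] := by
          simp only [hL', ne_eq, List.map_eq_nil_iff, List.range_eq_nil]
          omega
        have hL'le : ∀ q ∈ L', q ≤ -2 := by
          intro q hq
          simp only [hL', List.mem_map, List.mem_range] at hq
          obtain ⟨i, hi, rfl⟩ := hq
          have := ha (i + 2) (by omega) (by omega)
          exact_mod_cast this
        have hC : negCF L' < -1 := negCF_lt L' hL'le hL'ne
        have hC0 : negCF L' ≠ 0 := by linarith
        have hsplit : (List.range n).map (fun i => ((a (i + 1) : ℤ) : ℚ))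
            = ((a 1 : ℤ) : ℚ) :: L' := by
          have h1 : n = (n + 1 - 2) + 1 := by omega
          rw [h1, List.range_succ_eq_map, List.map_cons, List.map_map]
          congr 1
        rw [hsplit, negCF_cons _ _ hL'ne] at hcf
        -- hcf : a 1 - 1 / negCF L' = x / (y - x)
        have haux' : (yv 1 : ℚ) = -negCF L' * yv 2 := by
          simpa using haux
        have h0Q : (yv 0 : ℚ) = (yv 2 : ℚ) + yv 1 * ((a 1 : ℚ) + 1) := by
          rw [h0eq]; push_cast; ring
        rw [h0Q, haux']
        field_simp at hcf ⊢
        linear_combination (-(yv 2 : ℚ)) * hcf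
    exact_mod_cast hQ
  -- integer divisibility argument
  have hxmy : 0 < x - y := by omega
  have hy1pos : 0 < yv 1 := hpos 1 le_rfl hn
  have hcxy : IsCoprime (x - y) y := by
    have := hcop.add_mul_left_left (-1)
    rwa [show x + y * (-1) = x - y by ring] at this
  have dvd1 : (x - y) ∣ yv 1 := by
    have hd : (x - y) ∣ yv 1 * y := ⟨-yv 0, by linarith [hkey]⟩
    exact hcxy.dvd_of_dvd_mul_right hd
  have dvd2 : yv 1 ∣ (x - y) := by
    have hd : yv 1 ∣ (x - y) * yv 0 := ⟨-y, by linarith [hkey]⟩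
    exact (hcop01.symm.dvd_of_dvd_mul_right hd)
  have hy1 : yv 1 = x - y := Int.dvd_antisymm (le_of_lt hy1pos) (le_of_lt hxmy) dvd2 dvd1
  refine ⟨?_, hy1⟩
  have : (yv 0 + y) * (y - x) = 0 := by
    rw [hy1] at hkey; linarith [hkey]
  have hyx' : (y - x : ℤ) ≠ 0 := by omega
  rcases mul_eq_zero.mp this with h | h
  · omega
  · exact absurd h hyx'
end

section
/- Let $c_1,\dots,c_n \ge 2$ be integers and $x_0 > x_1 > \cdots > x_n = 1 > x_{n+1} = 0$ satisfy $x_{j-1} = c_j x_j - x_{j+1}$. If $n_1, \dots, n_n$ are integers with $n_1 \le c_1 - 1$ and $n_j \le c_j - 2$ for all $j \ge 2$, then $\sum_{j=1}^n n_j x_j < x_0$. -/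
/-!
Write `S k = ∑_{k < j ≤ n} m j * x j`. Downward induction from `S n = 0` gives the tail bound
`S k + x (k + 1) ≤ x k - 1`: the recurrence `x k = c (k+1) x (k+1) - x (k+2)` absorbs the
defect `m (k+1) ≤ c (k+1) - 2` exactly. At `k = 1` the extra unit allowed for `m 1` is paid for
by the term `x 1 ≥ 0` on the left, leaving `S 0 ≤ x 0 - 1`.
-/

open Finset

section ContinuedFractionRecurrence

variable {n : ℕ} {c x m : ℕ → ℤ}

theorem pos_of_forall_succ_lt_of_pos (hdec : ∀ j < n, x (j + 1) < x j) (hxn : 0 < x n)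
    {j : ℕ} (hj : j ≤ n) : 0 < x j :=
  hxn.trans_le <| (strictAntiOn_Iic_of_succ_lt hdec).antitoneOn (Set.mem_Iic.2 hj)
    (Set.mem_Iic.2 le_rfl) hj

theorem sum_Ioc_mul_add_le_sub_one (hpos : ∀ j ≤ n, 0 ≤ x j) (hxn : x n = 1)
    (hxn1 : x (n + 1) = 0) (hrec : ∀ j < n, x j = c (j + 1) * x (j + 1) - x (j + 2))
    {k : ℕ} (hk : k ≤ n) (hm : ∀ j, k < j → j ≤ n → m j ≤ c j - 2) :
    ∑ j ∈ Ioc k n, m j * x j + x (k + 1) ≤ x k - 1 := by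
  induction hk using Nat.decreasingInduction with
  | self => simp [hxn, hxn1]
  | of_succ k hkn ih =>
    have htail := ih fun j hj hjn => hm j (by omega) hjn
    have hhead : m (k + 1) * x (k + 1) ≤ (c (k + 1) - 2) * x (k + 1) :=
      mul_le_mul_of_nonneg_right (hm (k + 1) k.lt_succ_self hkn) (hpos _ hkn)
    rw [← Icc_add_one_left_eq_Ioc, Icc_eq_cons_Ioc hkn, sum_cons, hrec k hkn]
    linarith

end ContinuedFractionRecurrence

theorem stmt5_general (n : ℕ) (c x m : ℕ → ℤ)
    (hdec : ∀ j, j ≤ n → x (j + 1) < x j)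
    (hxn : x n = 1) (hxn1 : x (n + 1) = 0)
    (hrec : ∀ j, 1 ≤ j → j ≤ n → x (j - 1) = c j * x j - x (j + 1))
    (hm1 : m 1 ≤ c 1 - 1)
    (hm : ∀ j, 2 ≤ j → j ≤ n → m j ≤ c j - 2) :
    ∑ j ∈ Finset.Icc 1 n, m j * x j < x 0 := by
  rcases Nat.eq_zero_or_pos n with rfl | hn
  · simp [hxn]
  have hpos : ∀ j ≤ n, 0 ≤ x j := fun j hj =>
    (pos_of_forall_succ_lt_of_pos (fun j hj => hdec j hj.le) (by omega) hj).le
  have hrec' : ∀ j < n, x j = c (j + 1) * x (j + 1) - x (j + 2) := fun j hj =>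
    hrec (j + 1) j.succ_pos hj
  have htail := sum_Ioc_mul_add_le_sub_one hpos hxn hxn1 hrec' hn hm
  have hhead : m 1 * x 1 ≤ (c 1 - 1) * x 1 := mul_le_mul_of_nonneg_right hm1 (hpos 1 hn)
  rw [Icc_eq_cons_Ioc hn, sum_cons, hrec' 0 hn]
  linarith

/-- "Claim 2" of the HKM-strong verification: if `n₁ ≤ c₁ - 1` and
`n_j ≤ c_j - 2` for `j ≥ 2`, then `∑ n_j x_j < x₀`. -/
theorem stmt5 (n : ℕ) (hn : 1 ≤ n) (c x m : ℕ → ℤ)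
    (hc : ∀ j, 1 ≤ j → j ≤ n → 2 ≤ c j)
    (hdec : ∀ j, j ≤ n → x (j + 1) < x j)
    (hxn : x n = 1) (hxn1 : x (n + 1) = 0)
    (hrec : ∀ j, 1 ≤ j → j ≤ n → x (j - 1) = c j * x j - x (j + 1))
    (hm1 : m 1 ≤ c 1 - 1)
    (hm : ∀ j, 2 ≤ j → j ≤ n → m j ≤ c j - 2) :
    ∑ j ∈ Finset.Icc 1 n, m j * x j < x 0 :=
  stmt5_general n c x m hdec hxn hxn1 hrec hm1 hm
end

section
/- Let $x_0 > x_1 > \cdots > x_n > 0$ be a strictly decreasing sequence of positive integers and let $n_1,\dots,n_n$ be integers, not all zero, with $n_j \ge -1$ for all $j$, satisfying: whenever $n_j = -1$ for some $j$, there exists $j' < j$ with $n_{j'} > 0$ and $n_{j''} = 0$ for all $j' < j'' < j$. Then $\sum_{j=1}^n n_j x_j > 0$. -/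
/-- "Claim 1" of the HKM-strong verification: under conditions (a)–(c) on the
coefficients `n_j` (here `m j`), the sum `∑ n_j x_j` is positive. -/
theorem stmt6 (n : ℕ) (hn : 1 ≤ n) (x m : ℕ → ℤ)
    (hpos : ∀ j, j ≤ n → 0 < x j)
    (hdec : ∀ j, j < n → x (j + 1) < x j)
    (hm1 : ∀ j, 1 ≤ j → j ≤ n → -1 ≤ m j)
    (hnz : ∃ j, 1 ≤ j ∧ j ≤ n ∧ m j ≠ 0)
    (hcond : ∀ j, 1 ≤ j → j ≤ n → m j = -1 →
      ∃ j', 1 ≤ j' ∧ j' < j ∧ 0 < m j' ∧ ∀ j'', j' < j'' → j'' < j → m j'' = 0) :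
    0 < ∑ j ∈ Finset.Icc 1 n, m j * x j := by
  have hxdec : ∀ a b, a < b → b ≤ n → x b < x a := by
    intro a b hab hbn
    induction b with
    | zero => omega
    | succ c ih =>
      rcases Nat.lt_succ_iff_lt_or_eq.mp hab with h | h
      · exact lt_trans (hdec c (by omega)) (ih h (by omega))
      · subst h; exact hdec a (by omega)
  have key : ∀ t, t ≤ n →
      0 ≤ ∑ j ∈ Finset.Icc 1 t, m j * x j ∧
      ∀ k, 1 ≤ k → k ≤ t → m k ≠ 0 → (∀ j, k < j → j ≤ t → m j = 0) →
        0 < ∑ j ∈ Finset.Icc 1 t, m j * x j ∧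
        (0 < m k → x k ≤ ∑ j ∈ Finset.Icc 1 t, m j * x j) := by
    intro t
    induction t using Nat.strong_induction_on with
    | _ t ih =>
      intro htn
      match t with
      | 0 =>
        simp only [Finset.Icc_self, Finset.Icc_eq_empty_of_lt (by norm_num : (1:ℕ) > 0)]
        constructor
        · simp
        · intro k hk1 hk0; omega
      | Nat.succ s =>
        have hsum : ∑ j ∈ Finset.Icc 1 (s+1), m j * x j
            = (∑ j ∈ Finset.Icc 1 s, m j * x j) + m (s+1) * x (s+1) :=
          Finset.sum_Icc_succ_top (by omega) _
        have ihs := ih s (by omega) (by omega)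
        rcases lt_trichotomy (m (s+1)) 0 with hneg | hzero | hposm
        · -- m (s+1) = -1
          have hm : m (s+1) = -1 := by
            have := hm1 (s+1) (by omega) htn; omega
          obtain ⟨j', hj'1, hj'lt, hj'pos, hzeros⟩ := hcond (s+1) (by omega) htn hm
          have hSeq : ∑ j ∈ Finset.Icc 1 s, m j * x j
              = ∑ j ∈ Finset.Icc 1 j', m j * x j := by
            refine (Finset.sum_subset ?_ ?_).symm
            · exact Finset.Icc_subset_Icc_right (by omega)
            · intro j hj hj'
              simp only [Finset.mem_Icc] at hj hj'
              have : m j = 0 := hzeros j (by omega) (by omega)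
              simp [this]
          have ihj := (ih j' (by omega) (by omega)).2 j' hj'1 (le_refl _)
            (by omega) (by intro j h1 h2; omega)
          have hxj : x j' ≤ ∑ j ∈ Finset.Icc 1 j', m j * x j := ihj.2 hj'pos
          have hxlt : x (s+1) < x j' := hxdec j' (s+1) (by omega) htn
          have hpos' : 0 < ∑ j ∈ Finset.Icc 1 (s+1), m j * x j := by
            rw [hsum, hSeq, hm]; linarith
          refine ⟨le_of_lt hpos', ?_⟩
          intro k hk1 hkt hknz hlast
          have hk : k = s + 1 := by
            by_contra h
            have := hlast (s+1) (by omega) (le_refl _)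
            omega
          exact ⟨hpos', fun h => by rw [hk] at h; omega⟩
        · -- m (s+1) = 0
          have hSeq : ∑ j ∈ Finset.Icc 1 (s+1), m j * x j
              = ∑ j ∈ Finset.Icc 1 s, m j * x j := by
            rw [hsum, hzero]; ring
          rw [hSeq]
          refine ⟨ihs.1, ?_⟩
          intro k hk1 hkt hknz hlast
          have hk : k ≤ s := by
            rcases Nat.lt_succ_iff_lt_or_eq.mp (Nat.lt_succ_of_le hkt) with h | h
            · omega
            · exfalso; rw [h] at hknz; exact hknz hzero
          exact ihs.2 k hk1 hk hknz (fun j h1 h2 => hlast j h1 (by omega))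
        · -- m (s+1) > 0
          have hxpos := hpos (s+1) htn
          have hterm : x (s+1) ≤ m (s+1) * x (s+1) :=
            le_mul_of_one_le_left (le_of_lt hxpos) (by omega)
          have hpos' : 0 < ∑ j ∈ Finset.Icc 1 (s+1), m j * x j := by
            rw [hsum]; have := ihs.1; linarith
          refine ⟨le_of_lt hpos', ?_⟩
          intro k hk1 hkt hknz hlast
          refine ⟨hpos', fun _ => ?_⟩
          have hk : k = s + 1 := by
            by_contra h
            have := hlast (s+1) (by omega) (le_refl _)
            omega
          rw [hk, hsum]
          have := ihs.1; linarith
  obtain ⟨j0, hj01, hj0n, hj0nz⟩ := hnz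
  set S := (Finset.Icc 1 n).filter (fun j => m j ≠ 0) with hS
  have hne : S.Nonempty := ⟨j0, by simp [hS, Finset.mem_filter, Finset.mem_Icc]; exact ⟨⟨hj01, hj0n⟩, hj0nz⟩⟩
  set k := S.max' hne with hk
  have hkmem : k ∈ S := S.max'_mem hne
  simp only [hS, Finset.mem_filter, Finset.mem_Icc] at hkmem
  have hlast : ∀ j, k < j → j ≤ n → m j = 0 := by
    intro j hkj hjn
    by_contra hnz'
    have hjS : j ∈ S := by simp [hS, Finset.mem_filter, Finset.mem_Icc]; exact ⟨⟨by omega, hjn⟩, hnz'⟩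
    have := S.le_max' j hjS
    omega
  exact ((key n (le_refl n)).2 k hkmem.1.1 hkmem.1.2 hkmem.2 hlast).1
end

section
/- Define $d(L(q,r), i)$ for coprime $0 < r < q$ and $i \in \mathbb{Z}$ recursively by $d(L(1,0), 0) = 0$ and $d(L(q,r), i) = \frac{1}{4qr}\big(qr - (2i+1-q-r)^2\big) - d(L(r, q \bmod r), i \bmod r)$. Then $d(L(q,r), r) - d(L(q,r), 0) = 1 - \frac{1}{q}$. -/
/-- The Ozsváth–Szabó recursion for the correction terms of lens spaces,
`d(L(q,r), i) = (qr - (2i+1-q-r)²)/(4qr) - d(L(r, q mod r), i mod r)`, with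
`d(L(·,0), ·) = 0` (in particular `d(L(1,0),0) = 0`). -/
def dInv : ℕ → ℕ → ℤ → ℚ
  | _, 0, _ => 0
  | q, r + 1, i =>
      ((q : ℚ) * ((r : ℚ) + 1) - (((2 * i + 1 - (q : ℤ) - ((r : ℤ) + 1)) : ℤ) : ℚ) ^ 2)
          / (4 * (q : ℚ) * ((r : ℚ) + 1))
        - dInv (r + 1) (q % (r + 1)) (i % ((r : ℤ) + 1))
termination_by q r _ => r
decreasing_by exact Nat.mod_lt _ (Nat.succ_pos r)

/-- `d(L(q,r), r) - d(L(q,r), 0) = 1 - 1/q`. -/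
theorem stmt9 (q r : ℕ) (h0 : 0 < r) (hrq : r < q) (hcop : Nat.Coprime q r) :
    dInv q r (r : ℤ) - dInv q r 0 = 1 - 1 / (q : ℚ) := by
  obtain ⟨r', rfl⟩ : ∃ r', r = r' + 1 := ⟨r - 1, (Nat.succ_pred_eq_of_pos h0).symm⟩
  rw [dInv, dInv]
  have hmod : ((r' : ℤ) + 1) % ((r' : ℤ) + 1) = 0 % ((r' : ℤ) + 1) := by
    simp
  push_cast
  rw [hmod]
  have hq' : 0 < q := lt_trans h0 hrq
  have hq : (q : ℚ) ≠ 0 := Nat.cast_ne_zero.mpr hq'.ne'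
  have hr : ((r' : ℚ) + 1) ≠ 0 := by positivity
  field_simp
  ring
end

section
/- Let $x, y$ be coprime integers with $0 < y \le x$ (i.e., $x/y \ge 1$) and $x \ne y$. Then there exist a unique $n \ge 1$ and unique integers $a_1, \dots, a_n$ with all $a_i \le -2$ such that $\frac{x}{y - x} = a_1 - \cfrac{1}{a_2 - \cfrac{1}{\cdots - \cfrac{1}{a_n}}}$. -/
theorem Rat.den_inv_fract_lt {q : ℚ} (h : Int.fract q ≠ 0) : (Int.fract q)⁻¹.den < q.den := by
  have hnum_nonneg : 0 ≤ (Int.fract q).num := Rat.num_nonneg.2 (Int.fract_nonneg q)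
  have hnum_lt : (Int.fract q).num < (Int.fract q).den :=
    Rat.num_lt_denom_iff.2 (Int.fract_lt_one q)
  rw [Rat.den_inv_of_ne_zero h, ← Rat.den_intFract q]
  omega

lemma neg_one_lt_and_lt_zero_of_inv_lt_neg_one {s : ℚ} (hs : s⁻¹ < -1) : -1 < s ∧ s < 0 := by
  have hs0 : s < 0 := inv_lt_zero.1 (hs.trans (by norm_num))
  refine ⟨?_, hs0⟩
  simpa using (inv_lt_of_neg hs0 (by norm_num)).1 hs

def IsNegCFExpansion (q : ℚ) (l : List ℤ) : Prop :=
  l ≠ [] ∧ (∀ a ∈ l, a ≤ -2) ∧ negCF (l.map (fun a => (a : ℚ))) = q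

namespace IsNegCFExpansion

variable {q : ℚ} {a b : ℤ} {l : List ℤ}

lemma singleton_iff : IsNegCFExpansion q [a] ↔ a ≤ -2 ∧ (a : ℚ) = q := by
  simp [IsNegCFExpansion, negCF]

lemma cons_cons_iff :
    IsNegCFExpansion q (a :: b :: l) ↔ a ≤ -2 ∧ IsNegCFExpansion (a - q)⁻¹ (b :: l) := by
  have hval : negCF ((a :: b :: l).map (fun a => (a : ℚ))) =
      a - (negCF ((b :: l).map (fun a => (a : ℚ))))⁻¹ := by
    simp [negCF]
  simp only [IsNegCFExpansion, hval, List.forall_mem_cons, ne_eq, reduceCtorEq,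
    not_false_eq_true, true_and, and_assoc]
  refine and_congr_right fun _ => and_congr_right fun _ => and_congr_right fun _ => ?_
  constructor
  · rintro rfl
    simp
  · intro h
    rw [h]
    simp

theorem lt_neg_one : ∀ {q : ℚ} {l : List ℤ}, IsNegCFExpansion q l → q < -1
  | _, [], h => (h.1 rfl).elim
  | _, [a], h => by
    obtain ⟨ha, rfl⟩ := singleton_iff.1 h
    have ha' : (a : ℚ) ≤ -2 := by exact_mod_cast ha
    linarith
  | _, a :: _ :: _, h => by
    obtain ⟨ha, htail⟩ := cons_cons_iff.1 h
    obtain ⟨h₁, -⟩ := neg_one_lt_and_lt_zero_of_inv_lt_neg_one htail.lt_neg_one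
    have ha' : (a : ℚ) ≤ -2 := by exact_mod_cast ha
    linarith

lemma mem_Ioo (h : IsNegCFExpansion q (a :: b :: l)) : q ∈ Set.Ioo (a : ℚ) (a + 1) := by
  obtain ⟨_, htail⟩ := cons_cons_iff.1 h
  obtain ⟨h₁, h₂⟩ := neg_one_lt_and_lt_zero_of_inv_lt_neg_one htail.lt_neg_one
  constructor <;> linarith

lemma floor_eq (h : IsNegCFExpansion q (a :: l)) : ⌊q⌋ = a := by
  cases l with
  | nil => rw [← (singleton_iff.1 h).2, Int.floor_intCast]
  | cons b l => exact Int.floor_eq_iff.2 ⟨h.mem_Ioo.1.le, h.mem_Ioo.2⟩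

lemma fract_ne_zero (h : IsNegCFExpansion q (a :: b :: l)) : Int.fract q ≠ 0 := by
  rintro hq
  obtain ⟨n, rfl⟩ := Int.fract_eq_zero_iff.1 hq
  obtain ⟨h₁, h₂⟩ := h.mem_Ioo
  have h₁' : a < n := by exact_mod_cast h₁
  have h₂' : n < a + 1 := by exact_mod_cast h₂
  omega

theorem unique :
    ∀ {q : ℚ} {l l' : List ℤ}, IsNegCFExpansion q l → IsNegCFExpansion q l' → l = l'
  | _, [], _, h, _ | _, _, [], _, h => (h.1 rfl).elim
  | _, [a], [a'], h, h' => by rw [← h.floor_eq, h'.floor_eq]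
  | _, [a], _ :: _ :: _, h, h' => by
    rw [← (singleton_iff.1 h).2] at h'
    exact (h'.fract_ne_zero (Int.fract_intCast a)).elim
  | _, _ :: _ :: _, [a'], h, h' => by
    rw [← (singleton_iff.1 h').2] at h
    exact (h.fract_ne_zero (Int.fract_intCast a')).elim
  | _, a :: _ :: _, a' :: _ :: _, h, h' => by
    obtain rfl : a = a' := by rw [← h.floor_eq, h'.floor_eq]
    rw [(cons_cons_iff.1 h).2.unique (cons_cons_iff.1 h').2]

end IsNegCFExpansion

theorem exists_isNegCFExpansion {q : ℚ} (hq : q < -1) : ∃ l, IsNegCFExpansion q l := by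
  induction hd : q.den using Nat.strong_induction_on generalizing q with
  | _ d ih =>
  have hfloor : ⌊q⌋ ≤ -2 := by
    have : ⌊q⌋ < -1 := Int.floor_lt.2 (by exact_mod_cast hq)
    omega
  by_cases hfract : Int.fract q = 0
  · obtain ⟨a, rfl⟩ := Int.fract_eq_zero_iff.1 hfract
    exact ⟨[a], IsNegCFExpansion.singleton_iff.2 ⟨by simpa using hfloor, rfl⟩⟩
  · have htail : ((⌊q⌋ : ℚ) - q)⁻¹ = -(Int.fract q)⁻¹ := by
      rw [← Int.self_sub_floor, ← inv_neg, neg_sub]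
    have htail_lt : ((⌊q⌋ : ℚ) - q)⁻¹ < -1 := by
      rw [htail, neg_lt_neg_iff]
      exact (one_lt_inv₀ (lt_of_le_of_ne (Int.fract_nonneg q) (Ne.symm hfract))).2
        (Int.fract_lt_one q)
    have htail_den : ((⌊q⌋ : ℚ) - q)⁻¹.den < d := by
      rw [htail, Rat.neg_den, ← hd]
      exact Rat.den_inv_fract_lt hfract
    obtain ⟨l, hl⟩ := ih _ htail_den htail_lt rfl
    obtain ⟨b, l, rfl⟩ := List.exists_cons_of_ne_nil hl.1
    exact ⟨⌊q⌋ :: b :: l, IsNegCFExpansion.cons_cons_iff.2 ⟨hfloor, hl⟩⟩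

theorem existsUnique_isNegCFExpansion {q : ℚ} (hq : q < -1) : ∃! l, IsNegCFExpansion q l :=
  let ⟨l, hl⟩ := exists_isNegCFExpansion hq
  ⟨l, hl, fun _ h' => h'.unique hl⟩

theorem stmt13_general (x y : ℤ) (hy : 0 < y) (hyx : y ≤ x) (hne : x ≠ y) :
    ∃! l : List ℤ, l ≠ [] ∧ (∀ a ∈ l, a ≤ -2) ∧
      negCF (l.map (fun a => (a : ℚ))) = (x : ℚ) / ((y : ℚ) - (x : ℚ)) := by
  have hy' : (0 : ℚ) < y := by exact_mod_cast hy
  have hyx' : (y : ℚ) < x := by exact_mod_cast lt_of_le_of_ne hyx (Ne.symm hne)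
  refine existsUnique_isNegCFExpansion ?_
  rw [div_lt_iff_of_neg (by linarith)]
  linarith

/-- for coprime `0 < y ≤ x` with `x ≠ y`, the rational number `x/(y-x)` has a
unique negative continued fraction expansion `[a₁,…,aₙ]` with all `aᵢ ≤ -2` (uniqueness of
both the length `n ≥ 1` and the partial quotients, encoded as a unique nonempty list). -/
theorem stmt13 (x y : ℤ) (hy : 0 < y) (hyx : y ≤ x) (hne : x ≠ y) (hcop : IsCoprime x y) :
    ∃! l : List ℤ, l ≠ [] ∧ (∀ a ∈ l, a ≤ -2) ∧
      negCF (l.map (fun a => (a : ℚ))) = (x : ℚ) / ((y : ℚ) - (x : ℚ)) :=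
  stmt13_general x y hy hyx hne
end

section
/- Let $a_1, \dots, a_n \le -2$ be integers and let $(y_0, \dots, y_n)$ with $y_n = 1$, $y_j > 0$ for $j \ge 1$, satisfy the recursions $-y_0 = -(a_1+1)y_1 - y_2$ and $y_{j-1} = -a_j y_j - y_{j+1}$ for $2 \le j \le n$ (with $y_{n+1} = 0$). Then $\frac{(a_1+1, a_2+2, \dots, a_n+2) \cdot (y_1, \dots, y_n)}{y_0} + \frac{y_1}{y_0} - 1 = \frac{1}{y_0}$. -/
/-! Each summand `(aⱼ + 2) yⱼ` with `j ≥ 2` is a second difference `(yⱼ - yⱼ₊₁) - (yⱼ₋₁ - yⱼ)`,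
so the weighted sum telescopes to `(yₙ - yₙ₊₁) - (y₁ - y₂) = 1 - y₁ + y₂`; with the first recursion
this makes the numerator `y₀ + 1 - y₁`. The same telescoping shows `y₁ - y₂ ≥ 1`, since all summands
are `≤ 0`, and hence `y₀ = (a₁ + 1) y₁ + y₂ < 0`, so the divisions are genuine. -/

theorem sum_Icc_two_add_two_mul_eq_sub {R : Type*} [CommRing R] {n : ℕ} (hn : 1 ≤ n)
    {a y : ℕ → R} (hrec : ∀ j, 2 ≤ j → j ≤ n → y (j - 1) = -a j * y j - y (j + 1)) :
    ∑ j ∈ Finset.Icc 2 n, (a j + 2) * y j = (y n - y (n + 1)) - (y 1 - y 2) := by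
  induction n, hn using Nat.le_induction with
  | base => simp
  | succ m hm ih =>
    rw [Finset.sum_Icc_succ_top (by omega), ih fun j h2 hj ↦ hrec j h2 (by omega)]
    have hlast := hrec (m + 1) (by omega) le_rfl
    rw [Nat.add_sub_cancel] at hlast
    linear_combination hlast

/-- the `d₃`-invariant computation
`((a₁+1,a₂+2,…,aₙ+2)·(y₁,…,yₙ))/y₀ + y₁/y₀ - 1 = 1/y₀`. -/
theorem stmt16 (n : ℕ) (hn : 1 ≤ n) (a y : ℕ → ℤ)
    (ha : ∀ i, 1 ≤ i → i ≤ n → a i ≤ -2)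
    (hyn : y n = 1) (htail : ∀ j, n + 1 ≤ j → y j = 0)
    (hpos : ∀ j, 1 ≤ j → j ≤ n → 0 < y j)
    (h1 : -y 0 = -(a 1 + 1) * y 1 - y 2)
    (hrec : ∀ j, 2 ≤ j → j ≤ n → y (j - 1) = -a j * y j - y (j + 1)) :
    (((a 1 + 1) * y 1 + ∑ j ∈ Finset.Icc 2 n, (a j + 2) * y j : ℤ) : ℚ) / (y 0 : ℚ)
      + (y 1 : ℚ) / (y 0 : ℚ) - 1 = 1 / (y 0 : ℚ) := by
  have hsum := sum_Icc_two_add_two_mul_eq_sub hn hrec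
  rw [hyn, htail (n + 1) le_rfl] at hsum
  have hsum_nonpos : ∑ j ∈ Finset.Icc 2 n, (a j + 2) * y j ≤ 0 :=
    Finset.sum_nonpos fun j hj ↦ by
      obtain ⟨h2j, hjn⟩ := Finset.mem_Icc.mp hj
      exact mul_nonpos_of_nonpos_of_nonneg (by linarith [ha j (by omega) hjn])
        (hpos j (by omega) hjn).le
  have hy0 : y 0 < 0 := by
    have : (a 1 + 1) * y 1 ≤ -1 * y 1 :=
      mul_le_mul_of_nonneg_right (by linarith [ha 1 le_rfl hn]) (hpos 1 le_rfl hn).le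
    linarith
  have hnum : (a 1 + 1) * y 1 + ∑ j ∈ Finset.Icc 2 n, (a j + 2) * y j = y 0 + 1 - y 1 := by
    linarith
  have hy0' : (y 0 : ℚ) ≠ 0 := by exact_mod_cast hy0.ne
  rw [hnum]
  field_simp
  push_cast
  ring
end
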